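/- For every ε > 0, the matrix A + 2πε·E₁₁ (the derivative of the lift F_{D,ε} of the dissipative map at the fixed point p = 0, namely the matrix with rows (2 + 2πε, 1, 0), (1, 2, 1), (0, 1, 1)) has three distinct real eigenvalues μ₁ < μ₂ < μ₃ satisfying 0 < μ₁ < 1 < μ₂ < 3 < μ₃. In particular the derivative at p is hyperbolic with a one-dimensional stable direction and a weak–strong splitting of the unstable directions, for every ε > 0. -/
import Mathlib


open Polynomial

/-- The derivative at the fixed point `p = 0` of the lift of the dissipative map `f_{D,ε}`:
the matrix `A + 2πε·E₁₁`. -/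
noncomputable def MD (ε : ℝ) : Matrix (Fin 3) (Fin 3) ℝ :=
  !![2 + 2 * Real.pi * ε, 1, 0; 1, 2, 1; 0, 1, 1]

/-- For every `ε > 0`, the matrix `A + 2πε·E₁₁` has three distinct real eigenvalues
`μ₁ < μ₂ < μ₃` with `0 < μ₁ < 1 < μ₂ < 3 < μ₃`: the derivative at `p` is hyperbolic with a
one-dimensional stable direction and a weak–strong splitting of the unstable directions. -/
theorem dissipative_derivative_spectrum (ε : ℝ) (hε : 0 < ε) :
    ∃ μ₁ μ₂ μ₃ : ℝ, μ₁ < μ₂ ∧ μ₂ < μ₃ ∧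
      0 < μ₁ ∧ μ₁ < 1 ∧ 1 < μ₂ ∧ μ₂ < 3 ∧ 3 < μ₃ ∧
      (MD ε).charpoly = (X - C μ₁) * (X - C μ₂) * (X - C μ₃) := by
  set a : ℝ := 2 + 2 * Real.pi * ε with ha
  have ha2 : 2 < a := by
    have := Real.pi_pos
    nlinarith
  set P : ℝ[X] := (MD ε).charpoly with hPdef
  have hP : P = X^3 - C (3 + a) * X^2 + C (3*a) * X + C (1 - a) := by
    rw [hPdef, Matrix.charpoly, Matrix.det_fin_three]
    simp [MD, Matrix.charmatrix_apply, Matrix.diagonal, Matrix.vecHead, Matrix.vecTail,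
      map_ofNat, ha]
    ring
  set f : ℝ → ℝ := fun x => x^3 - (3 + a) * x^2 + 3*a*x + (1 - a) with hf
  have hev : ∀ x : ℝ, P.eval x = f x := by
    intro x; rw [hP]; simp [hf]
  have hcont : Continuous f := by fun_prop
  have hf0 : f 0 < 0 := by simp [hf]; linarith
  have hf1 : 0 < f 1 := by simp [hf]; nlinarith
  have hf3 : f 3 < 0 := by simp [hf]; nlinarith
  have hfb : 0 < f (a + 3) := by simp [hf]; nlinarith
  -- roots by IVT
  obtain ⟨μ₁, hμ₁m, hμ₁r⟩ : ∃ x ∈ Set.Ioo (0:ℝ) 1, f x = 0 := by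
    have := intermediate_value_Ioo (by norm_num : (0:ℝ) ≤ 1) hcont.continuousOn
    obtain ⟨x, hx, hfx⟩ := this ⟨hf0, hf1⟩
    exact ⟨x, hx, hfx⟩
  obtain ⟨μ₂, hμ₂m, hμ₂r⟩ : ∃ x ∈ Set.Ioo (1:ℝ) 3, f x = 0 := by
    have := intermediate_value_Ioo' (by norm_num : (1:ℝ) ≤ 3) hcont.continuousOn
    obtain ⟨x, hx, hfx⟩ := this ⟨hf3, hf1⟩
    exact ⟨x, hx, hfx⟩
  obtain ⟨μ₃, hμ₃m, hμ₃r⟩ : ∃ x ∈ Set.Ioo (3:ℝ) (a+3), f x = 0 := by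
    have := intermediate_value_Ioo (by linarith : (3:ℝ) ≤ a + 3) hcont.continuousOn
    obtain ⟨x, hx, hfx⟩ := this ⟨hf3, hfb⟩
    exact ⟨x, hx, hfx⟩
  obtain ⟨h01, h11⟩ := hμ₁m
  obtain ⟨h21, h23⟩ := hμ₂m
  obtain ⟨h33, h3b⟩ := hμ₃m
  refine ⟨μ₁, μ₂, μ₃, by linarith, by linarith, h01, h11, h21, h23, h33, ?_⟩
  -- now the factorization
  set Q : ℝ[X] := (X - C μ₁) * (X - C μ₂) * (X - C μ₃) with hQdef
  have hQmonic : Q.Monic := ((monic_X_sub_C μ₁).mul (monic_X_sub_C μ₂)).mul (monic_X_sub_C μ₃)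
  have hQdeg : Q.degree = 3 := by
    rw [hQdef, degree_mul, degree_mul, degree_X_sub_C, degree_X_sub_C, degree_X_sub_C]
    rfl
  have hPmonic : P.Monic := (MD ε).charpoly_monic
  have hPdeg : P.degree = 3 := by
    rw [hPdef, Matrix.charpoly_degree_eq_dim]
    simp
  have hPnat : P.natDegree = 3 := natDegree_eq_of_degree_eq_some hPdeg
  by_cases hD : P - Q = 0
  · exact sub_eq_zero.mp hD
  · exfalso
    have hdlt : (P - Q).degree < P.degree :=
      degree_sub_lt (hPdeg.trans hQdeg.symm) hPmonic.ne_zero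
        (by rw [hPmonic.leadingCoeff, hQmonic.leadingCoeff])
    have hnlt : (P - Q).natDegree < 3 := by
      have := natDegree_lt_natDegree hD hdlt
      omega
    have hroot : ∀ μ ∈ ({μ₁, μ₂, μ₃} : Finset ℝ), μ ∈ (P - Q).roots.toFinset := by
      intro μ hμ
      rw [Multiset.mem_toFinset, mem_roots hD]
      have hPQ : P.eval μ = 0 ∧ Q.eval μ = 0 := by
        simp only [Finset.mem_insert, Finset.mem_singleton] at hμ
        rcases hμ with rfl | rfl | rfl
        · exact ⟨(hev _).trans hμ₁r, by simp [hQdef]⟩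
        · exact ⟨(hev _).trans hμ₂r, by simp [hQdef]⟩
        · exact ⟨(hev _).trans hμ₃r, by simp [hQdef]⟩
      simp [IsRoot, hPQ.1, hPQ.2]
    have hcard3 : ({μ₁, μ₂, μ₃} : Finset ℝ).card = 3 := by
      rw [Finset.card_insert_of_notMem, Finset.card_insert_of_notMem, Finset.card_singleton]
      · simp only [Finset.mem_singleton]; intro h; subst h; linarith
      · simp only [Finset.mem_insert, Finset.mem_singleton]
        push_neg
        constructor <;> intro h <;> subst h <;> linarith
    have h1 : 3 ≤ (P - Q).roots.toFinset.card := by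
      rw [← hcard3]; exact Finset.card_le_card (fun x hx => hroot x hx)
    have h2 : (P - Q).roots.toFinset.card ≤ (P - Q).roots.card :=
      Multiset.toFinset_card_le _
    have h3 : (P - Q).roots.card ≤ (P - Q).natDegree := card_roots' _
    omega
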